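/- For every real x and every t ≠ 0, the Dunkl operator in the variable t applied to the function t ↦ e_μ(xt) satisfies (Λ_{μ,t} e_μ(x·))(t) = x e_μ(xt). -/

import Mathlib

/-!
On monomials the Dunkl operator acts by `Λ_μ s^(n+1) = (n + 1 + 2μ θ_(n+1)) s^n`, since the
difference quotient only sees the odd part. This factor is exactly the ratio
`γ_μ(n+1) / γ_μ(n)`, so `Λ_μ` shifts the terms of the series `e_μ(x·)` down by one, producing a
factor `x`. Termwise application is justified because `γ_μ(n) ≥ ε^n n!` for some `ε > 0`, so the
series and its derivative converge locally uniformly.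
-/

open scoped BigOperators

/-- The Dunkl coefficients γ_μ(i). -/
noncomputable def gammaMu (μ : ℝ) (i : ℕ) : ℝ :=
  if Even i then
    2 ^ i * (Nat.factorial (i / 2)) *
      Real.Gamma (((i / 2 : ℕ) : ℝ) + μ + 1 / 2) / Real.Gamma (μ + 1 / 2)
  else
    2 ^ i * (Nat.factorial (i / 2)) *
      Real.Gamma (((i / 2 : ℕ) : ℝ) + μ + 3 / 2) / Real.Gamma (μ + 1 / 2)

/-- θ_i = 0 if i is even, 1 if i is odd. -/
noncomputable def thetaFn (i : ℕ) : ℝ := if Even i then 0 else 1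

/-- The Dunkl exponential e_μ(x) = Σ x^i / γ_μ(i). -/
noncomputable def dunklExp (μ : ℝ) (x : ℝ) : ℝ := ∑' i : ℕ, x ^ i / gammaMu μ i

/-- The Dunkl operator (Λ_μ f)(x) = f'(x) + μ (f(x) - f(-x)) / x. -/
noncomputable def dunklOp (μ : ℝ) (f : ℝ → ℝ) (x : ℝ) : ℝ :=
  deriv f x + μ * (f x - f (-x)) / x

/-- Q(t) = Σ c_i t^i / γ_μ(i). -/
noncomputable def Qf (μ : ℝ) (c : ℕ → ℝ) (t : ℝ) : ℝ := ∑' i : ℕ, c i * t ^ i / gammaMu μ i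

/-- The Dunkl–Appell polynomials q_i(x) = Σ_{j=0}^i (γ_μ(i)/(γ_μ(j)γ_μ(i-j))) c_{i-j} x^j. -/
noncomputable def qPoly (μ : ℝ) (c : ℕ → ℝ) (i : ℕ) (x : ℝ) : ℝ :=
  ∑ j ∈ Finset.range (i + 1),
    gammaMu μ i / (gammaMu μ j * gammaMu μ (i - j)) * c (i - j) * x ^ j

/-- The operators K_n^μ(f;x). -/
noncomputable def Kop (μ : ℝ) (c : ℕ → ℝ) (n : ℕ) (f : ℝ → ℝ) (x : ℝ) : ℝ :=
  1 / (Qf μ c 1 * dunklExp μ (n * x)) *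
    ∑' i : ℕ, qPoly μ c i (n * x) / gammaMu μ i * f (((i : ℝ) + 2 * μ * thetaFn i) / n)

theorem hasDerivAt_tsum_mul_pow {c : ℕ → ℝ}
    (hc : ∀ r : ℝ, Summable fun n : ℕ => ((n : ℝ) + 1) * |c n| * r ^ n) (y : ℝ) :
    HasDerivAt (fun z => ∑' n, c n * z ^ n) (∑' n : ℕ, c n * (n * y ^ (n - 1))) y := by
  set R := |y| + 1
  have hR : 1 ≤ R := le_add_of_nonneg_left (abs_nonneg y)
  have hy : y ∈ Metric.ball (0 : ℝ) R := by simp [R]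
  refine hasDerivAt_tsum_of_isPreconnected (hc R) Metric.isOpen_ball
    (convex_ball (0 : ℝ) R).isPreconnected (fun n z _ => (hasDerivAt_pow n z).const_mul (c n))
    (fun n z hz => ?_) hy ?_ hy
  · have hz : |z| ≤ R := by simpa using (mem_ball_zero_iff.mp hz).le
    have hpow : |z| ^ (n - 1) ≤ R ^ n :=
      (pow_le_pow_left₀ (abs_nonneg z) hz _).trans (pow_le_pow_right₀ hR (Nat.sub_le n 1))
    rw [Real.norm_eq_abs, abs_mul, abs_mul, abs_pow, Nat.abs_cast]
    calc |c n| * (n * |z| ^ (n - 1)) ≤ |c n| * ((n + 1) * R ^ n) := by gcongr; linarith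
      _ = (n + 1) * |c n| * R ^ n := by ring
  · refine (hc |y|).of_norm_bounded fun n => ?_
    rw [Real.norm_eq_abs, abs_mul, abs_pow]
    nlinarith [mul_nonneg (abs_nonneg (c n)) (pow_nonneg (abs_nonneg y) n)]

theorem one_sub_neg_one_pow_eq_two_mul_thetaFn (n : ℕ) : 1 - (-1 : ℝ) ^ n = 2 * thetaFn n := by
  rcases Nat.even_or_odd n with h | h
  · simp [thetaFn, h, h.neg_one_pow]
  · norm_num [thetaFn, Nat.not_even_iff_odd.mpr h, h.neg_one_pow]

section gammaMu

variable {μ : ℝ}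

theorem gammaMu_pos (hμ : 0 < μ + 1 / 2) (n : ℕ) : 0 < gammaMu μ n := by
  have hΓ : ∀ a : ℝ, 0 ≤ a → 0 < Real.Gamma (a + μ + 1 / 2) := fun a ha =>
    Real.Gamma_pos_of_pos (by linarith)
  have hΓ₀ : 0 < Real.Gamma (μ + 1 / 2) := Real.Gamma_pos_of_pos hμ
  have hk : (0 : ℝ) ≤ ((n / 2 : ℕ) : ℝ) := Nat.cast_nonneg _
  unfold gammaMu
  split
  · have := hΓ _ hk
    positivity
  · have := hΓ (((n / 2 : ℕ) : ℝ) + 1) (by linarith)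
    rw [show ((n / 2 : ℕ) : ℝ) + 1 + μ + 1 / 2 = ((n / 2 : ℕ) : ℝ) + μ + 3 / 2 by ring] at this
    positivity

theorem gammaMu_zero (hμ : 0 < μ + 1 / 2) : gammaMu μ 0 = 1 := by
  rw [gammaMu, if_pos Even.zero]
  simp only [pow_zero, Nat.zero_div, Nat.factorial_zero, Nat.cast_one, Nat.cast_zero, one_mul,
    zero_add]
  exact div_self (Real.Gamma_pos_of_pos hμ).ne'

theorem gammaMu_succ (hμ : 0 < μ + 1 / 2) (n : ℕ) :
    gammaMu μ (n + 1) = (n + 1 + 2 * μ * thetaFn (n + 1)) * gammaMu μ n := by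
  rcases Nat.even_or_odd' n with ⟨k, rfl | rfl⟩
  · have ho : ¬Even (2 * k + 1) := Nat.not_even_two_mul_add_one k
    have hk : (0 : ℝ) < k + μ + 1 / 2 := by linarith [(Nat.cast_nonneg k : (0 : ℝ) ≤ k)]
    simp only [gammaMu, thetaFn, if_pos (even_two_mul k), if_neg ho,
      show (2 * k + 1) / 2 = k by omega, show 2 * k / 2 = k by omega]
    rw [show (k : ℝ) + μ + 3 / 2 = k + μ + 1 / 2 + 1 by ring, Real.Gamma_add_one hk.ne']
    push_cast
    ring
  · have ho : ¬Even (2 * k + 1) := Nat.not_even_two_mul_add_one k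
    have he : Even (2 * k + 1 + 1) := ⟨k + 1, by omega⟩
    simp only [gammaMu, thetaFn, if_pos he, if_neg ho,
      show (2 * k + 1 + 1) / 2 = k + 1 by omega, show (2 * k + 1) / 2 = k by omega,
      Nat.factorial_succ]
    push_cast
    rw [show (k : ℝ) + 1 + μ + 1 / 2 = k + μ + 3 / 2 by ring]
    ring

theorem pow_mul_factorial_le_gammaMu (hμ : 0 < μ + 1 / 2) (n : ℕ) :
    min 1 (1 + 2 * μ) ^ n * n.factorial ≤ gammaMu μ n := by
  set ε := min 1 (1 + 2 * μ)
  have hε₁ : ε ≤ 1 := min_le_left _ _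
  have hε₂ : ε ≤ 1 + 2 * μ := min_le_right _ _
  have hε : 0 < ε := lt_min one_pos (by linarith)
  induction n with
  | zero => simp [gammaMu_zero hμ]
  | succ n ih =>
    have hn : (0 : ℝ) ≤ n := Nat.cast_nonneg n
    have hstep : ε * (n + 1) ≤ n + 1 + 2 * μ * thetaFn (n + 1) := by
      unfold thetaFn
      split
      · nlinarith
      · rcases le_or_gt μ 0 with h | h <;> nlinarith
    calc ε ^ (n + 1) * ((n + 1).factorial : ℝ) = (ε * (n + 1)) * (ε ^ n * n.factorial) := by
          push_cast [Nat.factorial_succ]; ring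
      _ ≤ (n + 1 + 2 * μ * thetaFn (n + 1)) * gammaMu μ n := by
          gcongr
          linarith [mul_pos hε (show (0 : ℝ) < n + 1 by positivity)]
      _ = gammaMu μ (n + 1) := (gammaMu_succ hμ n).symm

theorem summable_succ_mul_pow_div_gammaMu (hμ : 0 < μ + 1 / 2) (r : ℝ) :
    Summable fun n : ℕ => ((n : ℝ) + 1) * r ^ n / gammaMu μ n := by
  set ε := min 1 (1 + 2 * μ)
  have hε : 0 < ε := lt_min one_pos (by linarith)
  refine (Real.summable_pow_div_factorial (2 * |r| / ε)).of_norm_bounded fun n => ?_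
  have hγ := gammaMu_pos hμ n
  have hsucc : ((n : ℝ) + 1) ≤ 2 ^ n := by exact_mod_cast Nat.lt_two_pow_self
  rw [Real.norm_eq_abs, abs_div, abs_mul, abs_pow, abs_of_pos hγ, abs_of_nonneg (by positivity),
    div_pow, mul_pow, div_div, mul_comm (ε ^ n)]
  calc (n + 1) * |r| ^ n / gammaMu μ n ≤ (n + 1) * |r| ^ n / (n.factorial * ε ^ n) := by
        gcongr
        rw [mul_comm]
        exact pow_mul_factorial_le_gammaMu hμ n
    _ ≤ 2 ^ n * |r| ^ n / (n.factorial * ε ^ n) := by gcongr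

theorem summable_pow_div_gammaMu (hμ : 0 < μ + 1 / 2) (r : ℝ) :
    Summable fun n : ℕ => r ^ n / gammaMu μ n := by
  refine (summable_succ_mul_pow_div_gammaMu hμ |r|).of_norm_bounded fun n => ?_
  have hγ := gammaMu_pos hμ n
  rw [Real.norm_eq_abs, abs_div, abs_pow, abs_of_pos hγ]
  gcongr
  nlinarith [pow_nonneg (abs_nonneg r) n, (Nat.cast_nonneg n : (0 : ℝ) ≤ n)]

theorem hasDerivAt_dunklExp (hμ : 0 < μ + 1 / 2) (y : ℝ) :
    HasDerivAt (dunklExp μ) (∑' n : ℕ, n * y ^ (n - 1) / gammaMu μ n) y := by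
  have hc : ∀ r : ℝ, Summable fun n : ℕ => ((n : ℝ) + 1) * |(gammaMu μ n)⁻¹| * r ^ n := by
    intro r
    simpa [abs_of_pos (gammaMu_pos hμ _), div_eq_mul_inv, mul_right_comm]
      using summable_succ_mul_pow_div_gammaMu hμ r
  convert hasDerivAt_tsum_mul_pow hc y using 1
  · funext z
    simp only [dunklExp, div_eq_inv_mul]
  · simp only [div_eq_inv_mul]

end gammaMu

section dunklOp

variable {μ : ℝ}

theorem dunklOp_div_const (f : ℝ → ℝ) (c x : ℝ) :
    dunklOp μ (fun s => f s / c) x = dunklOp μ f x / c := by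
  simp only [dunklOp, deriv_div_const]
  ring

theorem dunklOp_mul_pow_succ (x : ℝ) {t : ℝ} (ht : t ≠ 0) (n : ℕ) :
    dunklOp μ (fun s => (x * s) ^ (n + 1)) t =
      (n + 1 + 2 * μ * thetaFn (n + 1)) * x * (x * t) ^ n := by
  have hderiv : deriv (fun s => (x * s) ^ (n + 1)) t = (n + 1) * (x * t) ^ n * x := by
    simpa using (((hasDerivAt_id t).const_mul x).fun_pow (n + 1)).deriv
  have hodd : (x * t) ^ (n + 1) - (x * -t) ^ (n + 1) = 2 * thetaFn (n + 1) * (x * t) ^ (n + 1) := by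
    rw [mul_neg, neg_pow, ← one_sub_neg_one_pow_eq_two_mul_thetaFn]
    ring
  rw [dunklOp, hderiv, hodd]
  field_simp
  ring

theorem dunklOp_mul_pow_succ_div_gammaMu (hμ : 0 < μ + 1 / 2) (x : ℝ) {t : ℝ} (ht : t ≠ 0)
    (n : ℕ) :
    dunklOp μ (fun s => (x * s) ^ (n + 1) / gammaMu μ (n + 1)) t =
      x * ((x * t) ^ n / gammaMu μ n) := by
  have hγ := gammaMu_pos hμ n
  have hc : 0 < (n : ℝ) + 1 + 2 * μ * thetaFn (n + 1) := by
    have := gammaMu_pos hμ (n + 1)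
    rw [gammaMu_succ hμ] at this
    exact (mul_pos_iff_of_pos_right hγ).mp this
  rw [dunklOp_div_const, dunklOp_mul_pow_succ x ht, gammaMu_succ hμ]
  field_simp

theorem dunklOp_tsum {f : ℕ → ℝ → ℝ} {f' : ℕ → ℝ} {t : ℝ} (hf : ∀ n, HasDerivAt (f n) (f' n) t)
    (hF : HasDerivAt (fun s => ∑' n, f n s) (∑' n, f' n) t)
    (hΛ : Summable fun n => dunklOp μ (f n) t)
    (ht : Summable fun n => f n t) (hnt : Summable fun n => f n (-t)) :
    dunklOp μ (fun s => ∑' n, f n s) t = ∑' n, dunklOp μ (f n) t := by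
  have hodd : Summable fun n => μ * (f n t - f n (-t)) / t :=
    ((ht.sub hnt).mul_left μ).div_const t
  have hf' : Summable f' := by
    refine (hΛ.sub hodd).congr fun n => ?_
    simp [dunklOp, (hf n).deriv]
  simp only [dunklOp, hF.deriv, (hf _).deriv]
  rw [hf'.tsum_add hodd, tsum_div_const, tsum_mul_left, ht.tsum_sub hnt]

end dunklOp

/-- the Dunkl operator in t applied to t ↦ e_μ(xt). -/
theorem dunklOp_dunklExp (μ : ℝ) (hμ : μ + 1 / 2 > 0) (x : ℝ) (t : ℝ) (ht : t ≠ 0) :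
    dunklOp μ (fun s => dunklExp μ (x * s)) t = x * dunklExp μ (x * t) := by
  set f : ℕ → ℝ → ℝ := fun n s => (x * s) ^ n / gammaMu μ n
  have hlin : HasDerivAt (fun s => x * s) x t := by simpa using (hasDerivAt_id t).const_mul x
  have hf : ∀ n : ℕ, HasDerivAt (f n) (n * (x * t) ^ (n - 1) * x / gammaMu μ n) t := fun n =>
    (hlin.fun_pow n).div_const (gammaMu μ n)
  have hF : HasDerivAt (fun s => ∑' n, f n s)
      (∑' n : ℕ, n * (x * t) ^ (n - 1) * x / gammaMu μ n) t := by
    have := (hasDerivAt_dunklExp hμ (x * t)).comp t hlin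
    simp_rw [← tsum_mul_right, ← mul_div_right_comm] at this
    exact this
  have hshift : ∀ n, dunklOp μ (f (n + 1)) t = x * f n t :=
    dunklOp_mul_pow_succ_div_gammaMu hμ x ht
  have hsum : Summable fun n => dunklOp μ (f (n + 1)) t :=
    ((summable_pow_div_gammaMu hμ (x * t)).mul_left x).congr fun n => (hshift n).symm
  have hconst : dunklOp μ (f 0) t = 0 := by simp [f, dunklOp]
  have hE : (fun s => dunklExp μ (x * s)) = fun s => ∑' n, f n s := rfl
  calc dunklOp μ (fun s => dunklExp μ (x * s)) t = ∑' n, dunklOp μ (f n) t := by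
        rw [hE]
        exact dunklOp_tsum hf hF ((summable_nat_add_iff 1).mp hsum)
          (summable_pow_div_gammaMu hμ (x * t)) (summable_pow_div_gammaMu hμ (x * -t))
    _ = ∑' n, x * f n t := by
        rw [tsum_eq_zero_add' (f := fun n => dunklOp μ (f n) t) hsum, hconst, zero_add]
        exact tsum_congr hshift
    _ = x * dunklExp μ (x * t) := tsum_mul_left
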